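/- Let Λ^! = (Λ^d_s)^! be presented by the quiver with vertices y ∈ ℕ^{d+1}, Σ y_i = s−1, arrows f_{i,y}: y → y+ε_i (1 ≤ i ≤ d, defined when y_{i−1} ≥ 1), with relations f_i f_i = 0 and f_i f_j = f_j f_i whenever both composities exist. Then any path in Λ^! containing the arrow-direction f_i more than once is zero. -/

import Mathlib

/-- Paths of a quiver, bundled with their endpoints. -/
abbrev PathIdx (V : Type) [Quiver.{0} V] := Σ a b : V, Quiver.Path a b

/-- The path algebra `FQ`: the vector space with basis the paths of the quiver. -/
abbrev PathAlg (F : Type) [Field F] (V : Type) [Quiver.{0} V] := PathIdx V →₀ F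

/-- Composition of composable bundled paths. -/
def pcomp {V : Type} [Quiver.{0} V] (p q : PathIdx V) (h : p.2.1 = q.1) : PathIdx V :=
  ⟨p.1, q.2.1, p.2.2.comp (q.2.2.cast h.symm rfl)⟩

/-- Multiplication of the path algebra: composition of composable paths, `0` otherwise. -/
noncomputable def pmul {F : Type} [Field F] {V : Type} [Quiver.{0} V] [DecidableEq V]
    (x y : PathAlg F V) : PathAlg F V :=
  x.sum fun p cp => y.sum fun q cq =>
    if h : p.2.1 = q.1 then Finsupp.single (pcomp p q h) (cp * cq) else 0

/-- The unit of the path algebra: the sum of the trivial paths at the vertices. -/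
noncomputable def pone (F : Type) [Field F] (V : Type) [Quiver.{0} V] [Fintype V] :
    PathAlg F V :=
  ∑ a : V, Finsupp.single (⟨a, a, Quiver.Path.nil⟩ : PathIdx V) 1

/-- `π : FQ → Λ` presents the algebra `Λ` as the quotient of the path algebra of the
quiver by the two-sided ideal generated by the relation set `Rel`. -/
def IsPresentation {F : Type} [Field F] {V : Type} [Quiver.{0} V] [DecidableEq V] [Fintype V]
    {Λ : Type} [Ring Λ] [Algebra F Λ] (π : PathAlg F V → Λ) (Rel : Set (PathAlg F V)) :
    Prop :=
  (∀ x y, π (x + y) = π x + π y) ∧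
  (∀ (c : F) (x), π (c • x) = c • π x) ∧
  (∀ x y, π (pmul x y) = π x * π y) ∧
  π (pone F V) = 1 ∧
  Function.Surjective π ∧
  ∀ x, π x = 0 ↔ x ∈ Submodule.span F {y | ∃ a b, ∃ r ∈ Rel, y = pmul a (pmul r b)}
/-- Vertices of the type `A` simplex quiver: tuples of `d+1` nonnegative integers
summing to `s - 1`. -/
def Vx (d s : ℕ) : Type := {x : Fin (d + 1) → ℕ // ∑ i, x i = s - 1}

/-- Lower coordinate `i.castSucc` by one and raise coordinate `i.succ` by one. -/
def stepv {d s : ℕ} (x : Vx d s) (i : Fin d) : Fin (d + 1) → ℕ :=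
  Function.update (Function.update x.1 i.castSucc (x.1 i.castSucc - 1)) i.succ
    (x.1 i.succ + 1)

/-- Arrows of the simplex quiver: in direction `i`, from `x` to `x - e_{i} + e_{i+1}`,
whenever the coordinate being lowered is positive. -/
def Ar (d s : ℕ) (x y : Vx d s) : Type :=
  {i : Fin d // 1 ≤ x.1 i.castSucc ∧ y.1 = stepv x i}

instance (d s : ℕ) : Quiver.{0} (Vx d s) := ⟨Ar d s⟩

instance (d s : ℕ) : DecidableEq (Vx d s) :=
  Subtype.instDecidableEq

instance (d s : ℕ) : Finite (Vx d s) := by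
  have hb : ∀ x : Vx d s, ∀ i, x.1 i < s + 1 := by
    intro x i
    have h1 : x.1 i ≤ ∑ j, x.1 j :=
      Finset.single_le_sum (fun j _ => Nat.zero_le (x.1 j)) (Finset.mem_univ i)
    have h2 := x.2
    omega
  exact Finite.of_injective
    (fun x : Vx d s => fun i => (⟨x.1 i, hb x i⟩ : Fin (s + 1)))
    (by
      intro a b h
      apply Subtype.ext
      funext i
      have := congrFun h i
      simpa [Fin.ext_iff] using this)

noncomputable instance (d s : ℕ) : Fintype (Vx d s) := Fintype.ofFinite _

/-- The bundled length-two path through two composable arrows. -/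
def pathTwo {d s : ℕ} {x y z : Vx d s} (a1 : Ar d s x y) (a2 : Ar d s y z) :
    PathIdx (Vx d s) :=
  ⟨x, z, (Quiver.Path.nil.cons (a1 : x ⟶ y)).cons (a2 : y ⟶ z)⟩

/-- The commutation relations `α_i α_j - α_j α_i` (terms falling off the quiver being
read as zero). -/
def RelComm (F : Type) [Field F] (d s : ℕ) : Set (PathAlg F (Vx d s)) :=
  {r | ∃ (x y z : Vx d s) (a1 : Ar d s x y) (a2 : Ar d s y z),
      (∃ (y' z' : Vx d s) (b1 : Ar d s x y') (b2 : Ar d s y' z'),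
        b1.1 = a2.1 ∧ b2.1 = a1.1 ∧
        r = Finsupp.single (pathTwo a1 a2) 1 - Finsupp.single (pathTwo b1 b2) 1) ∨
      ((¬ ∃ (y' z' : Vx d s) (b1 : Ar d s x y') (b2 : Ar d s y' z'),
          b1.1 = a2.1 ∧ b2.1 = a1.1) ∧
        r = Finsupp.single (pathTwo a1 a2) 1)}

/-- The relations of the quadratic dual `(Λ^d_s)^!`: zero relations `f_i f_i = 0`
and commutativity relations `f_i f_j = f_j f_i` whenever both composites exist. -/
def RelDual (F : Type) [Field F] (d s : ℕ) : Set (PathAlg F (Vx d s)) :=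
  {r | ∃ (x y z : Vx d s) (a1 : Ar d s x y) (a2 : Ar d s y z),
      (a1.1 = a2.1 ∧ r = Finsupp.single (pathTwo a1 a2) 1) ∨
      (∃ (y' z' : Vx d s) (b1 : Ar d s x y') (b2 : Ar d s y' z'),
        b1.1 = a2.1 ∧ b2.1 = a1.1 ∧
        r = Finsupp.single (pathTwo a1 a2) 1 - Finsupp.single (pathTwo b1 b2) 1)}

/-- The list of directions of the arrows along a path in the simplex quiver. -/
def dirList {d s : ℕ} : ∀ {a b : Vx d s}, Quiver.Path a b → List (Fin d)
  | _, _, Quiver.Path.nil => []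
  | _, _, Quiver.Path.cons p e => dirList p ++ [(e : Ar d s _ _).1]

/-!
Read a path as the word of its directions. The words of vanishing paths form a two-sided ideal
that contains every square `i i` and is closed under swapping adjacent letters `u v` with
`u ≠ v` and `v ≠ u + 1`: such a swap is always possible in the quiver, since `u` only changes
the coordinates `u` and `u + 1`, and it is then a commutativity relation.

By induction on the length it suffices to kill a window `i m i` in which `m` has no repeated
letter and avoids `i`. Let `c` be a run `j, j + 1, …, i` of consecutive letters ending at the
second `i`, and scan the letters before it from right to left. A letter `e` with `e + 1 = j`
extends the run; any other letter commutes past the whole run, leaving the shorter repeating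
word `i … i` in front. If the run absorbs all of `m`, then `j < i`, so the first `i` commutes
past `j`, leaving a shorter repeating word `i … i` behind.
-/

structure IsSwapIdeal {α : Type*} [LT α] (V : List α → Prop) : Prop where
  append_right : ∀ l₁ l₂, V l₁ → V (l₁ ++ l₂)
  append_left : ∀ l₁ l₂, V l₂ → V (l₁ ++ l₂)
  pair : ∀ i, V [i, i]
  swap : ∀ l₁ l₂ {u v}, u ≠ v → ¬ u ⋖ v →
    V (l₁ ++ v :: u :: l₂) → V (l₁ ++ u :: v :: l₂)

theorem List.IsChain.exists_rel_of_mem_tail {α : Type*} {R : α → α → Prop} {h v : α}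
    {l : List α} (hc : (h :: l).IsChain R) (hv : v ∈ l) : ∃ p ∈ h :: l, R p v := by
  induction l generalizing h with
  | nil => simp at hv
  | cons w l ih =>
    rw [List.isChain_cons_cons] at hc
    rcases List.mem_cons.mp hv with rfl | hv
    · exact ⟨h, List.mem_cons_self, hc.1⟩
    · obtain ⟨p, hp, hpv⟩ := ih hc.2 hv
      exact ⟨p, List.mem_cons_of_mem h hp, hpv⟩

namespace IsSwapIdeal

variable {α : Type*} [LinearOrder α] {V : List α → Prop}

theorem of_bubble_right (hV : IsSwapIdeal V) {e : α} :
    ∀ (pre t : List α), (∀ v ∈ t, e ≠ v ∧ ¬ e ⋖ v) → V (pre ++ t ++ [e]) → V (pre ++ e :: t)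
  | _, [], _, h => by simpa using h
  | pre, v :: t, ht, h => by
    have hv := ht v List.mem_cons_self
    refine hV.swap pre t hv.1 hv.2 ?_
    simpa using of_bubble_right hV (pre ++ [v]) t
      (fun w hw => ht w (List.mem_cons_of_mem v hw)) (by simpa using h)

theorem of_isChain_covBy (hV : IsSwapIdeal V) {n : ℕ}
    (ih : ∀ l : List α, l.length < n → ¬ l.Nodup → V l) (i : α) :
    ∀ (a c : List α), (i :: a ++ c).length ≤ n → (a ++ c).Nodup →
      c.IsChain (· ⋖ ·) → c.getLast? = some i → V (i :: a ++ c) := by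
  intro a
  induction a using List.reverseRecOn with
  | nil =>
    rintro (_ | ⟨h, _ | ⟨w, c⟩⟩) hn hnd hc hlast
    · simp at hlast
    · obtain rfl : h = i := by simpa using hlast
      exact hV.pair h
    have hi : i ∈ w :: c := List.mem_of_getLast? (by simpa using hlast)
    have hhi : h < i :=
      List.rel_of_pairwise_cons (List.isChain_iff_pairwise.mp (hc.imp fun _ _ => CovBy.lt)) hi
    have hrest : V ([h] ++ i :: w :: c) :=
      hV.append_left _ _ <| ih _ (by simp at hn ⊢; omega) (by simp [hi])
    exact hV.swap [] _ hhi.ne' (fun hih => hih.lt.not_gt hhi) hrest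
  | append_singleton a e iha =>
    rintro (_ | ⟨h, c⟩) hn hnd hc hlast
    · simp at hlast
    by_cases heh : e ⋖ h
    · simpa using iha (e :: h :: c) (by simpa using hn) (by simpa using hnd)
        (List.isChain_cons_cons.mpr ⟨heh, hc⟩) (by simpa using hlast)
    have hi : i ∈ h :: c := List.mem_of_getLast? hlast
    have he : e ∉ h :: c := by
      simp only [List.append_assoc, List.singleton_append] at hnd
      exact (List.nodup_cons.mp (List.nodup_append.mp hnd).2.1).1
    have hcov : ∀ v ∈ h :: c, e ≠ v ∧ ¬ e ⋖ v := by
      refine fun v hv => ⟨fun hev => he (hev ▸ hv), fun hev => ?_⟩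
      rcases List.mem_cons.mp hv with rfl | hv
      · exact heh hev
      · obtain ⟨p, hp, hpv⟩ := hc.exists_rel_of_mem_tail hv
        exact he (hev.unique_left hpv ▸ hp)
    have hshort : V (i :: a ++ h :: c) :=
      ih _ (by simp at hn ⊢; omega) (fun hnd' => (List.nodup_cons.mp hnd').1 (by simp [hi]))
    simpa using hV.of_bubble_right (i :: a) (h :: c) hcov (hV.append_right _ [e] hshort)

theorem of_not_nodup (hV : IsSwapIdeal V) {l : List α} (hl : ¬ l.Nodup) : V l := by
  induction h : l.length using Nat.strong_induction_on generalizing l with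
  | _ n ih =>
  rcases l with _ | ⟨j, l⟩
  · exact absurd List.nodup_nil hl
  by_cases hnd : l.Nodup
  · have hj : j ∈ l := by simpa [hnd] using hl
    obtain ⟨m, r, rfl⟩ := List.append_of_mem hj
    have hwin : V (j :: m ++ [j]) :=
      hV.of_isChain_covBy (fun l' hl' hl'nd => ih _ hl' hl'nd rfl) j m [j]
        (by simp at h ⊢; omega) (hnd.sublist (by simp)) (List.isChain_singleton j) rfl
    simpa using hV.append_right _ r hwin
  · exact hV.append_left [j] l (ih _ (by simp at h; omega) hnd rfl)

end IsSwapIdeal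

section PathAlgebra

variable {F : Type} [Field F] {V : Type} [Quiver.{0} V]

theorem pcomp_mk {a b c : V} (p : Quiver.Path a b) (q : Quiver.Path b c) :
    pcomp (⟨a, b, p⟩ : PathIdx V) ⟨b, c, q⟩ rfl = ⟨a, c, p.comp q⟩ := by
  simp [pcomp]

theorem pmul_single_single [DecidableEq V] (p q : PathIdx V) (h : p.2.1 = q.1) (c c' : F) :
    pmul (Finsupp.single p c) (Finsupp.single q c') =
      Finsupp.single (pcomp p q h) (c * c') := by
  simp [pmul, dif_pos h]

variable [DecidableEq V] [Fintype V] {Λ : Type} [Ring Λ] [Algebra F Λ]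
  {π : PathAlg F V → Λ} {Rel : Set (PathAlg F V)}

namespace IsPresentation

theorem map_comp (hπ : IsPresentation π Rel) {a b c : V} (p : Quiver.Path a b)
    (q : Quiver.Path b c) :
    π (.single ⟨a, c, p.comp q⟩ 1) = π (.single ⟨a, b, p⟩ 1) * π (.single ⟨b, c, q⟩ 1) := by
  rw [← hπ.2.2.1, pmul_single_single _ _ rfl, one_mul, pcomp_mk]

theorem map_eq_zero_of_mem (hπ : IsPresentation π Rel) {r : PathAlg F V} (hr : r ∈ Rel) :
    π r = 0 := by
  have hmem : pmul (pone F V) (pmul r (pone F V)) ∈ Submodule.span F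
      {y | ∃ a b, ∃ r ∈ Rel, y = pmul a (pmul r b)} :=
    Submodule.subset_span ⟨_, _, r, hr, rfl⟩
  simpa [hπ.2.2.1, hπ.2.2.2.1] using (hπ.2.2.2.2.2 _).mpr hmem

theorem map_eq_of_sub_mem (hπ : IsPresentation π Rel) {x y : PathAlg F V} (h : x - y ∈ Rel) :
    π x = π y := by
  simpa [← hπ.1, hπ.map_eq_zero_of_mem h] using hπ.1 (x - y) y

end IsPresentation

end PathAlgebra

section SimplexQuiver

variable {d s : ℕ}

theorem stepv_apply (x : Vx d s) (i : Fin d) (k : Fin (d + 1)) :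
    stepv x i k =
      x.1 k - (if (k : ℕ) = i then 1 else 0) + (if (k : ℕ) = i + 1 then 1 else 0) := by
  have hcs : k = i.castSucc ↔ (k : ℕ) = i := by simp [Fin.ext_iff]
  have hs : k = i.succ ↔ (k : ℕ) = i + 1 := by simp [Fin.ext_iff]
  simp only [stepv, Function.update_apply, hcs, hs]
  split_ifs <;> simp_all

theorem sum_stepv {x : Vx d s} {i : Fin d} (h : 1 ≤ x.1 i.castSucc) :
    ∑ k, stepv x i k = s - 1 := by
  have hpt : ∀ k, stepv x i k + (Pi.single i.castSucc 1 : Fin (d + 1) → ℕ) k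
      = x.1 k + (Pi.single i.succ 1 : Fin (d + 1) → ℕ) k := by
    intro k
    have hcs : k = i.castSucc ↔ (k : ℕ) = i := by simp [Fin.ext_iff]
    have hs : k = i.succ ↔ (k : ℕ) = i + 1 := by simp [Fin.ext_iff]
    simp only [stepv_apply, Pi.single_apply, hcs, hs]
    split_ifs <;> simp_all
  have := congrArg (fun f : Fin (d + 1) → ℕ => ∑ k, f k) (funext hpt)
  simp only [Finset.sum_add_distrib, Finset.sum_pi_single', Finset.mem_univ, if_true] at this
  rw [← x.2]
  omega

def Vx.step (x : Vx d s) (i : Fin d) (h : 1 ≤ x.1 i.castSucc) : Vx d s :=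
  ⟨stepv x i, sum_stepv h⟩

@[simp]
theorem Vx.val_step (x : Vx d s) (i : Fin d) (h : 1 ≤ x.1 i.castSucc) :
    (x.step i h).1 = stepv x i :=
  rfl

theorem Ar.exists_swap {x y z : Vx d s} (e₁ : Ar d s x y) (e₂ : Ar d s y z)
    (hne : e₁.1 ≠ e₂.1) (hcov : ¬ e₁.1 ⋖ e₂.1) :
    ∃ (y' : Vx d s) (f₁ : Ar d s x y') (f₂ : Ar d s y' z), f₁.1 = e₂.1 ∧ f₂.1 = e₁.1 := by
  obtain ⟨u, hu, hy⟩ := e₁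
  obtain ⟨v, hv, hz⟩ := e₂
  dsimp only at hne hcov ⊢
  have hne' : (u : ℕ) ≠ v := Fin.val_ne_of_ne hne
  have hcov' : (u : ℕ) + 1 ≠ v := by simpa using hcov
  rw [hy] at hv
  simp only [stepv_apply, Fin.val_castSucc] at hv
  have hv' : 1 ≤ x.1 v.castSucc := by split_ifs at hv <;> omega
  have hu' : 1 ≤ stepv x v u.castSucc := by
    simp only [stepv_apply, Fin.val_castSucc]
    split_ifs <;> omega
  refine ⟨x.step v hv', ⟨v, hv', rfl⟩, ⟨u, hu', ?_⟩, rfl, rfl⟩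
  funext k
  have hxk : (k : ℕ) = u → 1 ≤ x.1 k := fun h => by
    rwa [show k = u.castSucc from Fin.ext h]
  simp only [hz, stepv_apply, hy, Vx.val_step]
  split_ifs <;> omega

end SimplexQuiver

section Paths

variable {d s : ℕ}

theorem dirList_comp {a b c : Vx d s} (p : Quiver.Path a b) (q : Quiver.Path b c) :
    dirList (p.comp q) = dirList p ++ dirList q := by
  induction q with
  | nil => simp [dirList]
  | cons q e ih => simp [dirList, ih]

theorem exists_eq_comp_of_dirList_eq_append {a c : Vx d s} (p : Quiver.Path a c)
    {l₁ l₂ : List (Fin d)} (h : dirList p = l₁ ++ l₂) :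
    ∃ (b : Vx d s) (p₁ : Quiver.Path a b) (p₂ : Quiver.Path b c),
      p = p₁.comp p₂ ∧ dirList p₁ = l₁ ∧ dirList p₂ = l₂ := by
  induction p generalizing l₂ with
  | nil =>
    obtain ⟨rfl, rfl⟩ := List.append_eq_nil_iff.mp (by simpa [dirList] using h.symm)
    exact ⟨a, .nil, .nil, rfl, by simp [dirList], by simp [dirList]⟩
  | cons p e ih =>
    rcases List.eq_nil_or_concat l₂ with rfl | ⟨l₂, t, rfl⟩
    · exact ⟨_, p.cons e, .nil, rfl, by simpa using h, by simp [dirList]⟩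
    · rw [dirList, List.concat_eq_append, ← List.append_assoc] at h
      obtain ⟨hp, he⟩ := List.append_inj' h rfl
      obtain ⟨b, p₁, p₂, rfl, h₁, h₂⟩ := ih hp
      exact ⟨b, p₁, p₂.cons e, rfl, h₁, by rw [dirList, h₂, he, List.concat_eq_append]⟩

theorem exists_eq_pair_of_dirList_eq {a c : Vx d s} (p : Quiver.Path a c) {u v : Fin d}
    (h : dirList p = [u, v]) :
    ∃ (b : Vx d s) (e₁ : Ar d s a b) (e₂ : Ar d s b c),
      p = (Quiver.Path.nil.cons e₁).cons e₂ ∧ e₁.1 = u ∧ e₂.1 = v := by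
  have hlen := congrArg List.length h
  rcases p with _ | ⟨_ | ⟨_ | ⟨q, e₀⟩, e₁⟩, e₂⟩
  · simp [dirList] at hlen
  · simp [dirList] at hlen
  · simp only [dirList, List.nil_append, List.cons_append, List.cons.injEq] at h
    exact ⟨_, e₁, e₂, rfl, h.1, h.2.1⟩
  · simp [dirList] at hlen

variable {F : Type} [Field F] {Λ : Type} [Ring Λ] [Algebra F Λ]

def Vanishes (π : PathAlg F (Vx d s) → Λ) (l : List (Fin d)) : Prop :=
  ∀ (a b : Vx d s) (p : Quiver.Path a b), dirList p = l → π (.single ⟨a, b, p⟩ 1) = 0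

theorem isSwapIdeal_vanishes {π : PathAlg F (Vx d s) → Λ}
    (hπ : IsPresentation π (RelDual F d s)) : IsSwapIdeal (Vanishes π) where
  append_right l₁ l₂ h a c p hp := by
    obtain ⟨b, p₁, p₂, rfl, h₁, -⟩ := exists_eq_comp_of_dirList_eq_append p hp
    rw [hπ.map_comp, h a b p₁ h₁, zero_mul]
  append_left l₁ l₂ h a c p hp := by
    obtain ⟨b, p₁, p₂, rfl, -, h₂⟩ := exists_eq_comp_of_dirList_eq_append p hp
    rw [hπ.map_comp, h b c p₂ h₂, mul_zero]
  pair i a c p hp := by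
    obtain ⟨b, e₁, e₂, rfl, h₁, h₂⟩ := exists_eq_pair_of_dirList_eq p hp
    exact hπ.map_eq_zero_of_mem ⟨a, b, c, e₁, e₂, .inl ⟨h₁.trans h₂.symm, rfl⟩⟩
  swap l₁ l₂ u v hne hcov h a c p hp := by
    obtain ⟨b, p₁, q, rfl, h₁, hq⟩ := exists_eq_comp_of_dirList_eq_append p hp
    obtain ⟨b', p₂, p₃, rfl, h₂, h₃⟩ :=
      exists_eq_comp_of_dirList_eq_append (l₁ := [u, v]) q hq
    obtain ⟨y, e₁, e₂, rfl, rfl, rfl⟩ := exists_eq_pair_of_dirList_eq p₂ h₂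
    obtain ⟨y', f₁, f₂, hf₁, hf₂⟩ := e₁.exists_swap e₂ hne hcov
    have hcomm : π (.single ⟨b, b', (Quiver.Path.nil.cons e₁).cons e₂⟩ 1)
        = π (.single ⟨b, b', (Quiver.Path.nil.cons f₁).cons f₂⟩ 1) :=
      hπ.map_eq_of_sub_mem ⟨b, y, b', e₁, e₂, .inr ⟨y', b', f₁, f₂, hf₁, hf₂, rfl⟩⟩
    have hswapped := h a c (p₁.comp (((Quiver.Path.nil.cons f₁).cons f₂).comp p₃))
      (by simp [dirList_comp, dirList, h₁, h₃, hf₁, hf₂])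
    rwa [hπ.map_comp, hπ.map_comp, ← hcomm, ← hπ.map_comp, ← hπ.map_comp] at hswapped

end Paths

/-- In the quadratic dual `Λ^! = (Λ^d_s)^!` — presented by the simplex quiver with
relations `f_i f_i = 0` and `f_i f_j = f_j f_i` — any path containing some
arrow-direction `f_i` more than once is zero. -/
theorem stmt_12 (F : Type) [Field F] (d s : ℕ)
    (Λ : Type) [Ring Λ] [Algebra F Λ]
    (π : PathAlg F (Vx d s) → Λ) (hπ : IsPresentation π (RelDual F d s)) :
    ∀ p : PathIdx (Vx d s), (∃ i : Fin d, 2 ≤ (dirList p.2.2).count i) →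
      π (Finsupp.single p 1) = 0 := by
  rintro ⟨a, b, p⟩ ⟨i, hi⟩
  dsimp only at hi
  have hdup : ¬ (dirList p).Nodup := fun hnd => by
    have := List.nodup_iff_count_le_one.mp hnd i
    omega
  exact (isSwapIdeal_vanishes hπ).of_not_nodup hdup a b p rfl
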